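/- Let Ω ⊂ ℝⁿ be a bounded open set with C¹ boundary Γ = ∂Ω, with outer unit normal ν, and let γ : Γ → ℝⁿ be continuous with ν(x)·γ(x) ≥ δ₀ > 0 for all x ∈ Γ. Suppose (η, v, l) solves the Skorokhod problem: η is locally absolutely continuous with η(t) ∈ Ω̄ for all t ≥ 0, η̇(t) + l(t)γ(η(t)) = v(t) a.e., l(t) ≥ 0 a.e., and l(t) = 0 for a.e. t with η(t) ∈ Ω. Then l(t) ≤ δ₀⁻¹ |v(t)| for a.e. t ≥ 0, and |η̇(t)| ≤ (1 + ‖γ‖_∞/δ₀) |v(t)| for a.e. t ≥ 0. -/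

import Mathlib

/-!
At a time `s` where `η` is differentiable and `η s ∈ ∂Ω`, the function `t ↦ ψ (η t)` attains a
local maximum (it is `≤ 0` along the path and `= 0` at `s`), so `η̇ s` is tangent: `ν · η̇ = 0`.
Pairing `η̇ + l γ = v` with `ν` then gives `δ₀ l ≤ l (ν · γ) = ν · v ≤ |v|`, and the bound on `|η̇|`
follows from `η̇ = v - l γ`. Inside `Ω` the reflection term vanishes and `η̇ = v`.
-/

open MeasureTheory Filter Set

section Derivative

variable {E : Type*} [NormedAddCommGroup E] [NormedSpace ℝ E] [CompleteSpace E]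

theorem ae_hasDerivAt_of_eq_add_integral {η η' : ℝ → E}
    (hint : ∀ T : ℝ, 0 ≤ T → IntegrableOn η' (Icc 0 T))
    (hAC : ∀ t : ℝ, 0 ≤ t → η t = η 0 + ∫ s in (0:ℝ)..t, η' s) :
    ∀ᵐ x, 0 < x → HasDerivAt η (η' x) x := by
  have hT : ∀ T : ℕ, ∀ᵐ x : ℝ, x ∈ Ioo 0 (T : ℝ) → HasDerivAt η (η' x) x := by
    intro T
    have hT0 : (0 : ℝ) ≤ T := T.cast_nonneg
    have hii : IntervalIntegrable η' volume 0 T :=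
      (intervalIntegrable_iff_integrableOn_Icc_of_le hT0).2 (hint T hT0)
    filter_upwards [hii.ae_hasDerivAt_integral] with x hx hxT
    refine ((hx (uIcc_of_le hT0 ▸ Ioo_subset_Icc_self hxT) 0 left_mem_uIcc).const_add
      (η 0)).congr_of_eventuallyEq ?_
    filter_upwards [eventually_gt_nhds hxT.1] with t ht using hAC t ht.le
  filter_upwards [ae_all_iff.2 hT] with x hx hx0
  obtain ⟨T, hxT⟩ := exists_nat_gt x
  exact hx T ⟨hx0, hxT⟩

end Derivative

section InnerProduct

variable {F : Type*} [NormedAddCommGroup F] [InnerProductSpace ℝ F]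

theorem IsLocalMax.inner_gradient_eq_zero [CompleteSpace F] {ψ : F → ℝ} {η : ℝ → F} {e : F}
    {s : ℝ} (hψ : DifferentiableAt ℝ ψ (η s)) (hη : HasDerivAt η e s)
    (hmax : IsLocalMax (ψ ∘ η) s) : inner ℝ (gradient ψ (η s)) e = 0 := by
  rw [gradient, InnerProductSpace.toDual_symm_apply]
  exact hmax.hasDerivAt_eq_zero (hψ.hasFDerivAt.comp_hasDerivAt s hη)

theorem norm_inv_norm_smul_le_one (w : F) : ‖‖w‖⁻¹ • w‖ ≤ 1 := by
  simpa only [norm_smul, norm_inv, norm_norm] using inv_mul_le_one_of_le₀ le_rfl (norm_nonneg w)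

theorem le_inv_mul_norm_and_norm_le_of_inner_eq_zero {ν e g v : F} {l δ C : ℝ}
    (hν : ‖ν‖ ≤ 1) (hδ : 0 < δ) (hobl : δ ≤ inner ℝ ν g) (hgC : ‖g‖ ≤ C)
    (heq : e + l • g = v) (hl : 0 ≤ l) (he : inner ℝ ν e = 0) :
    l ≤ δ⁻¹ * ‖v‖ ∧ ‖e‖ ≤ (1 + C / δ) * ‖v‖ := by
  have hνv : l * inner ℝ ν g = inner ℝ ν v := by
    rw [← heq, inner_add_right, he, real_inner_smul_right, zero_add]
  have hlv : l ≤ δ⁻¹ * ‖v‖ := by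
    rw [le_inv_mul_iff₀ hδ]
    calc δ * l ≤ l * inner ℝ ν g := by nlinarith
      _ = inner ℝ ν v := hνv
      _ ≤ ‖ν‖ * ‖v‖ := real_inner_le_norm ν v
      _ ≤ ‖v‖ := mul_le_of_le_one_left (norm_nonneg v) hν
  refine ⟨hlv, ?_⟩
  calc ‖e‖ = ‖v - l • g‖ := by rw [← heq, add_sub_cancel_right]
    _ ≤ ‖v‖ + l * ‖g‖ := by
      simpa only [norm_smul, Real.norm_of_nonneg hl] using norm_sub_le v (l • g)
    _ ≤ ‖v‖ + δ⁻¹ * ‖v‖ * C := by gcongr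
    _ = (1 + C / δ) * ‖v‖ := by ring

end InnerProduct

theorem stmt_7_general (n : ℕ)
    (Ω : Set (EuclideanSpace ℝ (Fin n))) (hΩ : IsOpen Ω)
    (hb : Bornology.IsBounded Ω)
    (ψ : EuclideanSpace ℝ (Fin n) → ℝ) (hψ : ContDiff ℝ 1 ψ)
    (hΩψ : Ω = {x | ψ x < 0})
    (ν : EuclideanSpace ℝ (Fin n) → EuclideanSpace ℝ (Fin n))
    (hν : ∀ x ∈ frontier Ω, ν x = ‖gradient ψ x‖⁻¹ • gradient ψ x)
    (γ : EuclideanSpace ℝ (Fin n) → EuclideanSpace ℝ (Fin n))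
    (hγ : ContinuousOn γ (frontier Ω))
    (δ₀ : ℝ) (hδ₀ : 0 < δ₀)
    (hobl : ∀ x ∈ frontier Ω, δ₀ ≤ (inner ℝ (ν x) (γ x) : ℝ))
    (Cγ : ℝ) (hCγ : Cγ = sSup ((fun x => ‖γ x‖) '' frontier Ω))
    (η η' v : ℝ → EuclideanSpace ℝ (Fin n)) (l : ℝ → ℝ)
    (hmem : ∀ t : ℝ, 0 ≤ t → η t ∈ closure Ω)
    (hint : ∀ T : ℝ, 0 ≤ T → IntegrableOn η' (Set.Icc 0 T))
    (hAC : ∀ t : ℝ, 0 ≤ t → η t = η 0 + ∫ s in (0:ℝ)..t, η' s)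
    (hode : ∀ᵐ s ∂volume, 0 ≤ s → η' s + l s • γ (η s) = v s)
    (hl : ∀ᵐ s ∂volume, 0 ≤ s → 0 ≤ l s)
    (hl0 : ∀ᵐ s ∂volume, 0 ≤ s → η s ∈ Ω → l s = 0) :
    (∀ᵐ s ∂volume, 0 ≤ s → l s ≤ δ₀⁻¹ * ‖v s‖) ∧
    (∀ᵐ s ∂volume, 0 ≤ s → ‖η' s‖ ≤ (1 + Cγ / δ₀) * ‖v s‖) := by
  have hfr : IsCompact (frontier Ω) := hb.isCompact_closure.of_isClosed_subset
    isClosed_frontier frontier_subset_closure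
  have hγC : ∀ x ∈ frontier Ω, ‖γ x‖ ≤ Cγ := fun x hx =>
    hCγ ▸ le_csSup (hfr.bddAbove_image hγ.norm) ⟨x, hx, rfl⟩
  have hCγ0 : 0 ≤ Cγ := hCγ ▸ Real.sSup_nonneg (by rintro _ ⟨x, -, rfl⟩; exact norm_nonneg _)
  have hψη : ∀ t, 0 ≤ t → ψ (η t) ≤ 0 := fun t ht => closure_minimal
    (hΩψ ▸ fun x (hx : ψ x < 0) => hx.le) (isClosed_le hψ.continuous continuous_const) (hmem t ht)
  have key : ∀ᵐ s, 0 ≤ s → l s ≤ δ₀⁻¹ * ‖v s‖ ∧ ‖η' s‖ ≤ (1 + Cγ / δ₀) * ‖v s‖ := by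
    filter_upwards [hode, hl, hl0, volume.ae_ne 0, ae_hasDerivAt_of_eq_add_integral hint hAC]
      with s heq hls hl0s hs0 hder hs
    replace hs := hs.lt_of_ne' hs0
    by_cases hsΩ : η s ∈ Ω
    · have hls0 := hl0s hs.le hsΩ
      rw [hls0, zero_smul, add_zero] at heq
      rw [hls0, heq hs.le]
      exact ⟨by positivity, le_mul_of_one_le_left (norm_nonneg _)
        (le_add_of_nonneg_right (div_nonneg hCγ0 hδ₀.le))⟩
    have hsfr : η s ∈ frontier Ω := ⟨hmem s hs.le, by rwa [hΩ.interior_eq]⟩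
    have hmax : IsLocalMax (ψ ∘ η) s := by
      filter_upwards [eventually_gt_nhds hs] with t ht
      exact (hψη t ht.le).trans (not_lt.1 fun h => hsΩ (hΩψ ▸ h))
    refine le_inv_mul_norm_and_norm_le_of_inner_eq_zero (hν _ hsfr ▸ norm_inv_norm_smul_le_one _)
      hδ₀ (hobl _ hsfr) (hγC _ hsfr) (heq hs.le) (hls hs.le) ?_
    rw [hν _ hsfr, real_inner_smul_left,
      hmax.inner_gradient_eq_zero (hψ.differentiable one_ne_zero _) (hder hs), mul_zero]
  exact ⟨key.mono fun s hs hs0 => (hs hs0).1, key.mono fun s hs hs0 => (hs hs0).2⟩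

theorem stmt_7 (n : ℕ)
    (Ω : Set (EuclideanSpace ℝ (Fin n))) (hΩ : IsOpen Ω)
    (hb : Bornology.IsBounded Ω) (hne : Ω.Nonempty)
    (ψ : EuclideanSpace ℝ (Fin n) → ℝ) (hψ : ContDiff ℝ 1 ψ)
    (hΩψ : Ω = {x | ψ x < 0})
    (hgrad : ∀ x ∈ frontier Ω, gradient ψ x ≠ 0)
    (ν : EuclideanSpace ℝ (Fin n) → EuclideanSpace ℝ (Fin n))
    (hν : ∀ x ∈ frontier Ω, ν x = ‖gradient ψ x‖⁻¹ • gradient ψ x)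
    (γ : EuclideanSpace ℝ (Fin n) → EuclideanSpace ℝ (Fin n))
    (hγ : ContinuousOn γ (frontier Ω))
    (δ₀ : ℝ) (hδ₀ : 0 < δ₀)
    (hobl : ∀ x ∈ frontier Ω, δ₀ ≤ (inner ℝ (ν x) (γ x) : ℝ))
    (Cγ : ℝ) (hCγ : Cγ = sSup ((fun x => ‖γ x‖) '' frontier Ω))
    (η η' v : ℝ → EuclideanSpace ℝ (Fin n)) (l : ℝ → ℝ)
    (hmem : ∀ t : ℝ, 0 ≤ t → η t ∈ closure Ω)
    (hint : ∀ T : ℝ, 0 ≤ T → IntegrableOn η' (Set.Icc 0 T))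
    (hAC : ∀ t : ℝ, 0 ≤ t → η t = η 0 + ∫ s in (0:ℝ)..t, η' s)
    (hode : ∀ᵐ s ∂volume, 0 ≤ s → η' s + l s • γ (η s) = v s)
    (hl : ∀ᵐ s ∂volume, 0 ≤ s → 0 ≤ l s)
    (hl0 : ∀ᵐ s ∂volume, 0 ≤ s → η s ∈ Ω → l s = 0) :
    (∀ᵐ s ∂volume, 0 ≤ s → l s ≤ δ₀⁻¹ * ‖v s‖) ∧
    (∀ᵐ s ∂volume, 0 ≤ s → ‖η' s‖ ≤ (1 + Cγ / δ₀) * ‖v s‖) :=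
  stmt_7_general n Ω hΩ hb ψ hψ hΩψ ν hν γ hγ δ₀ hδ₀ hobl Cγ hCγ η η' v l hmem hint hAC hode hl hl0
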